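/- Let G be a multigraph given by a finite vertex type V, a finite edge type E, and an endpoint map ε, let G_s be its underlying simple graph, and let L*(G) be the partially reflexive graph on the edge set of G_s in which distinct edges of G_s are related iff they share a vertex and an edge p of G_s carries a loop iff at least two distinct edges of E have endpoint pair p. (i) If L*(G) has a stable cut, then G has a multigraph matching cut. (ii) If G has a multigraph matching cut and every vertex of G is incident to at least 2 edges of E, then L*(G) has a stable cut. -/

import Mathlib

/-!
Given a stable cut `S`, `A | B` of `L*(G)`, let `X` be the set of vertices covered by edges in `A`.
A multiedge crossing `(X, Xᶜ)` cannot lie in `A` (it would cover its outer endpoint) nor in `B`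
(it shares its inner endpoint with an edge of `A`), so its simple edge lies in `S`; since two
simple edges are related in `L*(G)` exactly when distinct multiedges realising them share a
vertex, independence of `S` makes the crossing multiedges a matching.

Conversely, the simple edges crossing a matching cut `(A, Aᶜ)` form an independent set of `L*(G)`
whose complement splits into the edges inside `A` and those inside `Aᶜ`. Each side is nonempty
because among the at least two multiedges at a vertex at most one crosses the cut.
-/

/-- `(A, B)` is a multigraph matching cut of the multigraph with vertex type
`V`, edge type `E` and endpoint map `ε`: a partition of `V` into two nonempty
sets such that every vertex is incident to at most one edge whose other
endpoint lies on the opposite side of the partition. -/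
def MGMatchingCut {V E : Type*} (ε : E → Sym2 V) (A B : Set V) : Prop :=
  A.Nonempty ∧ B.Nonempty ∧ Disjoint A B ∧ A ∪ B = Set.univ ∧
    (∀ v ∈ A, {e : E | ∃ u ∈ B, ε e = s(v, u)}.Subsingleton) ∧
    (∀ v ∈ B, {e : E | ∃ u ∈ A, ε e = s(v, u)}.Subsingleton)

/-- The multigraph with endpoint map `ε` has a multigraph matching cut. -/
def HasMGMatchingCut {V E : Type*} (ε : E → Sym2 V) : Prop :=
  ∃ A B : Set V, MGMatchingCut ε A B

/-- The edge set of the underlying simple graph `G_s` of the multigraph with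
endpoint map `ε`: the nondiagonal unordered pairs realised as the endpoint
pair of at least one edge. -/
def SimpleEdges {V E : Type*} (ε : E → Sym2 V) : Type _ :=
  {p : Sym2 V // ¬ p.IsDiag ∧ ∃ e : E, ε e = p}

/-- The partially reflexive graph `L*(G)` on the edge set of the underlying
simple graph `G_s`: distinct edges of `G_s` are related iff they share a
vertex, and an edge `p` of `G_s` carries a loop iff at least two distinct
edges of the multigraph have endpoint pair `p`. -/
def LStar {V E : Type*} (ε : E → Sym2 V) :
    SimpleEdges ε → SimpleEdges ε → Prop := fun p q =>
  (p ≠ q ∧ ∃ v : V, v ∈ p.val ∧ v ∈ q.val) ∨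
    (p = q ∧ ∃ e f : E, e ≠ f ∧ ε e = p.val ∧ ε f = q.val)

/-- `S` is an independent set of the partially reflexive graph given by the
symmetric relation `r` (loops allowed). -/
def PRIndep {W : Type*} (r : W → W → Prop) (S : Set W) : Prop :=
  ∀ u ∈ S, ∀ v ∈ S, ¬ r u v

/-- A stable cut of the partially reflexive graph given by `r`: an independent
set whose complement splits into two nonempty sets with no edges between. -/
def HasPRStableCut {W : Type*} (r : W → W → Prop) : Prop :=
  ∃ S : Set W, PRIndep r S ∧ ∃ A B : Set W, A.Nonempty ∧ B.Nonempty ∧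
    Disjoint A B ∧ A ∪ B = Sᶜ ∧ ∀ a ∈ A, ∀ b ∈ B, ¬ r a b

section

variable {V E : Type*} {ε : E → Sym2 V}

def Crosses (A : Set V) (z : Sym2 V) : Prop :=
  (∃ v ∈ z, v ∈ A) ∧ ∃ u ∈ z, u ∉ A

def CutIsMatching (ε : E → Sym2 V) (A : Set V) : Prop :=
  ∀ v, {e | v ∈ ε e ∧ Crosses A (ε e)}.Subsingleton

theorem crosses_compl {A : Set V} {z : Sym2 V} : Crosses Aᶜ z ↔ Crosses A z := by
  simp only [Crosses, Set.mem_compl_iff, not_not, and_comm]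

theorem not_crosses_iff {A : Set V} {z : Sym2 V} :
    ¬ Crosses A z ↔ (∀ v ∈ z, v ∈ A) ∨ ∀ v ∈ z, v ∉ A := by
  rw [Crosses, not_and_or, or_comm]
  simp only [not_exists, not_and, not_not]

theorem mem_and_crosses_iff {A : Set V} {z : Sym2 V} {v : V} (hv : v ∈ A) :
    v ∈ z ∧ Crosses A z ↔ ∃ u ∈ Aᶜ, z = s(v, u) := by
  constructor
  · rintro ⟨hvz, -, u, huz, hu⟩
    exact ⟨u, hu, (Sym2.mem_and_mem_iff (ne_of_mem_of_not_mem hv hu)).1 ⟨hvz, huz⟩⟩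
  · rintro ⟨u, hu, rfl⟩
    exact ⟨Sym2.mem_mk_left v u, ⟨v, Sym2.mem_mk_left v u, hv⟩, u, Sym2.mem_mk_right v u, hu⟩

theorem cutIsMatching_compl {A : Set V} : CutIsMatching ε Aᶜ ↔ CutIsMatching ε A := by
  simp only [CutIsMatching, crosses_compl]

theorem mgMatchingCut_compl_iff {A : Set V} :
    MGMatchingCut ε A Aᶜ ↔ A.Nonempty ∧ Aᶜ.Nonempty ∧ CutIsMatching ε A := by
  have hA : ∀ v ∈ A, {e | ∃ u ∈ Aᶜ, ε e = s(v, u)} = {e | v ∈ ε e ∧ Crosses A (ε e)} :=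
    fun v hv ↦ Set.ext fun e ↦ (mem_and_crosses_iff hv).symm
  have hAc : ∀ v ∈ Aᶜ, {e | ∃ u ∈ A, ε e = s(v, u)} = {e | v ∈ ε e ∧ Crosses A (ε e)} := by
    intro v hv
    ext e
    rw [Set.mem_ofPred_eq, Set.mem_ofPred_eq, ← crosses_compl, mem_and_crosses_iff hv, compl_compl]
  simp only [MGMatchingCut, CutIsMatching, disjoint_compl_right, Set.union_compl_self, true_and]
  refine and_congr_right fun _ ↦ and_congr_right fun _ ↦ ⟨fun ⟨h, hc⟩ v ↦ ?_, fun h ↦ ?_⟩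
  · by_cases hv : v ∈ A
    · exact hA v hv ▸ h v hv
    · exact hAc v hv ▸ hc v hv
  · exact ⟨fun v hv ↦ hA v hv ▸ h v, fun v hv ↦ hAc v hv ▸ h v⟩

theorem MGMatchingCut.compl_eq {A B : Set V} (h : MGMatchingCut ε A B) : Aᶜ = B :=
  compl_eq_iff_isCompl.2 ⟨h.2.2.1, codisjoint_iff.2 h.2.2.2.1⟩

theorem hasMGMatchingCut_iff :
    HasMGMatchingCut ε ↔ ∃ A : Set V, A.Nonempty ∧ Aᶜ.Nonempty ∧ CutIsMatching ε A := by
  refine ⟨fun ⟨A, B, h⟩ ↦ ⟨A, mgMatchingCut_compl_iff.1 (h.compl_eq ▸ h)⟩,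
    fun ⟨A, h⟩ ↦ ⟨A, Aᶜ, mgMatchingCut_compl_iff.2 h⟩⟩

def SimpleEdges.ofEdge (e : E) (he : ¬ (ε e).IsDiag) : SimpleEdges ε := ⟨ε e, he, e, rfl⟩

theorem lStar_iff {p q : SimpleEdges ε} :
    LStar ε p q ↔ ∃ e f, e ≠ f ∧ ε e = p.val ∧ ε f = q.val ∧ ∃ v, v ∈ ε e ∧ v ∈ ε f := by
  constructor
  · rintro (⟨hpq, v, hvp, hvq⟩ | ⟨rfl, e, f, hef, he, hf⟩)
    · obtain ⟨e, he⟩ := p.2.2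
      obtain ⟨f, hf⟩ := q.2.2
      refine ⟨e, f, ?_, he, hf, v, he ▸ hvp, hf ▸ hvq⟩
      rintro rfl
      exact hpq (Subtype.ext (he.symm.trans hf))
    · have hv := Sym2.out_fst_mem (ε e)
      exact ⟨e, f, hef, he, hf, _, hv, hf ▸ he ▸ hv⟩
  · rintro ⟨e, f, hef, he, hf, v, hve, hvf⟩
    by_cases hpq : p = q
    · exact Or.inr ⟨hpq, e, f, hef, he, hpq ▸ hf⟩
    · exact Or.inl ⟨hpq, v, he ▸ hve, hf ▸ hvf⟩

theorem exists_mem_of_lStar {p q : SimpleEdges ε} (h : LStar ε p q) :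
    ∃ v, v ∈ p.val ∧ v ∈ q.val := by
  obtain ⟨e, f, -, he, hf, v, hve, hvf⟩ := lStar_iff.1 h
  exact ⟨v, he ▸ hve, hf ▸ hvf⟩

theorem hasMGMatchingCut_of_hasPRStableCut (hloopless : ∀ e, ¬ (ε e).IsDiag)
    (h : HasPRStableCut (LStar ε)) : HasMGMatchingCut ε := by
  obtain ⟨S, hS, A, B, ⟨a, ha⟩, ⟨b, hb⟩, hAB, hABS, hno⟩ := h
  have hsep : ∀ p ∈ A, ∀ q ∈ B, ∀ v ∈ p.val, v ∉ q.val := fun p hp q hq v hvp hvq ↦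
    hno p hp q hq (Or.inl ⟨ne_of_mem_of_not_mem hp (Set.disjoint_right.1 hAB hq), v, hvp, hvq⟩)
  let X : Set V := {v | ∃ p ∈ A, v ∈ p.val}
  have hcut : ∀ e, Crosses X (ε e) → SimpleEdges.ofEdge e (hloopless e) ∈ S := by
    rintro e ⟨⟨v, hve, p, hp, hvp⟩, u, hue, hu⟩
    by_contra hnS
    have hAB' : SimpleEdges.ofEdge e (hloopless e) ∈ A ∪ B := hABS ▸ hnS
    rcases hAB' with hA | hB
    · exact hu ⟨_, hA, hue⟩
    · exact hsep p hp _ hB v hvp hve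
  refine hasMGMatchingCut_iff.2 ⟨X, ⟨_, a, ha, Sym2.out_fst_mem _⟩,
    ⟨_, fun ⟨p, hp, hvp⟩ ↦ hsep p hp b hb _ hvp (Sym2.out_fst_mem _)⟩, fun v e he f hf ↦ ?_⟩
  by_contra hef
  exact hS _ (hcut e he.2) _ (hcut f hf.2) (lStar_iff.2 ⟨e, f, hef, rfl, rfl, v, he.1, hf.1⟩)

theorem exists_forall_mem_of_cutIsMatching {A : Set V} (hA : CutIsMatching ε A) {v : V}
    (hv : v ∈ A) (hdeg : 2 ≤ {e | v ∈ ε e}.ncard) : ∃ e, ∀ w ∈ ε e, w ∈ A := by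
  obtain ⟨hnt, -⟩ := Set.one_lt_ncard_iff_nontrivial_and_finite.1 hdeg
  obtain ⟨e, hve, hcross⟩ : ∃ e, v ∈ ε e ∧ ¬ Crosses A (ε e) := by
    by_contra! h
    exact hnt.not_subsingleton ((hA v).anti fun e he ↦ ⟨he, h e he⟩)
  exact ⟨e, (not_crosses_iff.1 hcross).resolve_right fun h ↦ h v hve hv⟩

theorem hasPRStableCut_of_cutIsMatching (hloopless : ∀ e, ¬ (ε e).IsDiag) {A : Set V}
    (hA : A.Nonempty) (hAc : Aᶜ.Nonempty) (hm : CutIsMatching ε A)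
    (hdeg : ∀ v, 2 ≤ {e | v ∈ ε e}.ncard) : HasPRStableCut (LStar ε) := by
  obtain ⟨e, he⟩ := exists_forall_mem_of_cutIsMatching hm hA.some_mem (hdeg _)
  obtain ⟨f, hf⟩ := exists_forall_mem_of_cutIsMatching (cutIsMatching_compl.2 hm) hAc.some_mem
    (hdeg _)
  refine ⟨{p | Crosses A p.val}, ?_, {p | ∀ v ∈ p.val, v ∈ A}, {p | ∀ v ∈ p.val, v ∉ A},
    ⟨.ofEdge e (hloopless e), he⟩, ⟨.ofEdge f (hloopless f), hf⟩, ?_, ?_, ?_⟩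
  · intro p hp q hq hpq
    obtain ⟨e, f, hef, he, hf, v, hve, hvf⟩ := lStar_iff.1 hpq
    exact hef (hm v ⟨hve, he ▸ hp⟩ ⟨hvf, hf ▸ hq⟩)
  · exact Set.disjoint_left.2 fun p hpA hpB ↦
      hpB _ (Sym2.out_fst_mem _) (hpA _ (Sym2.out_fst_mem _))
  · ext p
    exact not_crosses_iff.symm
  · intro p hp q hq hpq
    obtain ⟨v, hvp, hvq⟩ := exists_mem_of_lStar hpq
    exact hq v hvq (hp v hvp)

end

theorem stmt16_general {V E : Type*} (ε : E → Sym2 V)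
    (hloopless : ∀ e : E, ¬ (ε e).IsDiag) :
    (HasPRStableCut (LStar ε) → HasMGMatchingCut ε) ∧
      ((HasMGMatchingCut ε ∧ ∀ v : V, 2 ≤ Set.ncard {e : E | v ∈ ε e}) →
        HasPRStableCut (LStar ε)) := by
  refine ⟨hasMGMatchingCut_of_hasPRStableCut hloopless, fun ⟨hcut, hdeg⟩ ↦ ?_⟩
  obtain ⟨A, hA, hAc, hm⟩ := hasMGMatchingCut_iff.1 hcut
  exact hasPRStableCut_of_cutIsMatching hloopless hA hAc hm hdeg

/-- Let `G` be a multigraph with finite vertex type `V`, finite edge type `E`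
and endpoint map `ε` (each edge has two distinct endpoints).
(i) If `L*(G)` has a (partially reflexive) stable cut, then `G` has a
multigraph matching cut. (ii) If `G` has a multigraph matching cut and every
vertex is incident to at least two edges, then `L*(G)` has a stable cut. -/
theorem stmt16 {V E : Type*} [Fintype V] [Fintype E] (ε : E → Sym2 V)
    (hloopless : ∀ e : E, ¬ (ε e).IsDiag) :
    (HasPRStableCut (LStar ε) → HasMGMatchingCut ε) ∧
      ((HasMGMatchingCut ε ∧ ∀ v : V, 2 ≤ Set.ncard {e : E | v ∈ ε e}) →
        HasPRStableCut (LStar ε)) :=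
  stmt16_general ε hloopless
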